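/- Let ι be a nonempty index set and A, B, C : ι → ℱ families of measurable events such that μ(B(x) ∩ C(x)) > 0 and μ(B(x) ∩ (C(x))ᶜ) > 0 for every x ∈ ι, and assume sup_{x∈ι} μ(C(x) | B(x)) < 1. Then sup_{x∈ι} μ(A(x) | B(x) ∩ (C(x))ᶜ) ≤ [ sup_{x∈ι} μ(A(x) | B(x)) − ( inf_{x∈ι} μ(A(x) | B(x) ∩ C(x)) ) · ( inf_{x∈ι} μ(C(x) | B(x)) ) ] / ( 1 − sup_{x∈ι} μ(C(x) | B(x)) ). -/
import Mathlib


open MeasureTheory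

/-- Conditional probability `μ(E | F) = μ(E ∩ F) / μ(F)`, as a real number. -/
noncomputable def condP {Ω : Type*} [MeasurableSpace Ω] (μ : Measure Ω)
    (E F : Set Ω) : ℝ :=
  (μ (E ∩ F)).toReal / (μ F).toReal

lemma condP_nonneg {Ω : Type*} [MeasurableSpace Ω] (μ : Measure Ω)
    (E F : Set Ω) : 0 ≤ condP μ E F :=
  div_nonneg ENNReal.toReal_nonneg ENNReal.toReal_nonneg

lemma condP_le_one {Ω : Type*} [MeasurableSpace Ω] (μ : Measure Ω)
    [IsFiniteMeasure μ] (E F : Set Ω) : condP μ E F ≤ 1 := by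
  unfold condP
  rcases eq_or_lt_of_le (ENNReal.toReal_nonneg : (0:ℝ) ≤ (μ F).toReal) with h | h
  · simp [← h]
  · rw [div_le_one h]
    exact ENNReal.toReal_mono (measure_ne_top μ F)
      (measure_mono Set.inter_subset_right)

theorem iSup_condProb_inter_compl_le
    {Ω : Type*} [MeasurableSpace Ω] (μ : Measure Ω) [IsProbabilityMeasure μ]
    {ι : Type*} [Nonempty ι]
    (A B C : ι → Set Ω)
    (hA : ∀ x, MeasurableSet (A x)) (hB : ∀ x, MeasurableSet (B x))
    (hC : ∀ x, MeasurableSet (C x))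
    (hBC : ∀ x, 0 < (μ (B x ∩ C x)).toReal)
    (hBCc : ∀ x, 0 < (μ (B x ∩ (C x)ᶜ)).toReal)
    (hsup : (⨆ x, condP μ (C x) (B x)) < 1) :
    (⨆ x, condP μ (A x) (B x ∩ (C x)ᶜ))
      ≤ ((⨆ x, condP μ (A x) (B x))
          - (⨅ x, condP μ (A x) (B x ∩ C x)) * (⨅ x, condP μ (C x) (B x)))
        / (1 - ⨆ x, condP μ (C x) (B x)) := by
  set S := ⨆ x, condP μ (C x) (B x) with hS
  set P := ⨆ x, condP μ (A x) (B x) with hP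
  set I1 := ⨅ x, condP μ (A x) (B x ∩ C x) with hI1
  set IQ := ⨅ x, condP μ (C x) (B x) with hIQ
  have hSpos : (0:ℝ) < 1 - S := by linarith
  have bddQ : BddAbove (Set.range fun x => condP μ (C x) (B x)) := by
    refine ⟨1, ?_⟩; rintro y ⟨x, rfl⟩; exact condP_le_one μ _ _
  have bddP : BddAbove (Set.range fun x => condP μ (A x) (B x)) := by
    refine ⟨1, ?_⟩; rintro y ⟨x, rfl⟩; exact condP_le_one μ _ _
  have bddI1 : BddBelow (Set.range fun x => condP μ (A x) (B x ∩ C x)) := by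
    refine ⟨0, ?_⟩; rintro y ⟨x, rfl⟩; exact condP_nonneg μ _ _
  have bddIQ : BddBelow (Set.range fun x => condP μ (C x) (B x)) := by
    refine ⟨0, ?_⟩; rintro y ⟨x, rfl⟩; exact condP_nonneg μ _ _
  have hI1nonneg : 0 ≤ I1 := le_ciInf fun x => condP_nonneg μ _ _
  have hIQnonneg : 0 ≤ IQ := le_ciInf fun x => condP_nonneg μ _ _
  refine ciSup_le fun x => ?_
  rw [le_div_iff₀ hSpos]
  -- notation for the relevant measures
  set b := (μ (B x)).toReal with hb
  set bc := (μ (B x ∩ C x)).toReal with hbc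
  set bcc := (μ (B x ∩ (C x)ᶜ)).toReal with hbcc
  set m1 := (μ (A x ∩ (B x ∩ C x))).toReal with hm1
  set m0 := (μ (A x ∩ (B x ∩ (C x)ᶜ))).toReal with hm0
  have hsplitB : b = bc + bcc := by
    rw [hb, hbc, hbcc, ← ENNReal.toReal_add (measure_ne_top μ _) (measure_ne_top μ _)]
    congr 1
    rw [← measure_inter_add_diff (B x) (hC x), Set.diff_eq]
  have hsplitA : (μ (A x ∩ B x)).toReal = m1 + m0 := by
    rw [hm1, hm0, ← ENNReal.toReal_add (measure_ne_top μ _) (measure_ne_top μ _)]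
    congr 1
    rw [← Set.inter_assoc, ← Set.inter_assoc,
      ← measure_inter_add_diff (A x ∩ B x) (hC x), Set.diff_eq]
  have hbcpos : 0 < bc := hBC x
  have hbccpos : 0 < bcc := hBCc x
  have hbpos : 0 < b := by rw [hsplitB]; linarith
  have hqx : condP μ (C x) (B x) = bc / b := by
    unfold condP; rw [Set.inter_comm, hbc, hb]
  have ha0 : condP μ (A x) (B x ∩ (C x)ᶜ) = m0 / bcc := by
    unfold condP; rw [hm0, hbcc]
  have ha1 : condP μ (A x) (B x ∩ C x) = m1 / bc := by
    unfold condP; rw [hm1, hbc]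
  have hp : condP μ (A x) (B x) = (m1 + m0) / b := by
    unfold condP; rw [hsplitA, hb]
  -- law of total probability
  have key : condP μ (A x) (B x ∩ (C x)ᶜ) * (1 - condP μ (C x) (B x))
      + condP μ (A x) (B x ∩ C x) * condP μ (C x) (B x)
      = condP μ (A x) (B x) := by
    rw [ha0, ha1, hp, hqx, hsplitB]
    field_simp
    ring
  -- bounds
  have hqS : condP μ (C x) (B x) ≤ S := le_ciSup bddQ x
  have hpP : condP μ (A x) (B x) ≤ P := le_ciSup bddP x
  have hI1le : I1 ≤ condP μ (A x) (B x ∩ C x) := ciInf_le bddI1 x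
  have hIQle : IQ ≤ condP μ (C x) (B x) := ciInf_le bddIQ x
  have ha0nonneg : 0 ≤ condP μ (A x) (B x ∩ (C x)ᶜ) := condP_nonneg μ _ _
  have hmul : I1 * IQ ≤ condP μ (A x) (B x ∩ C x) * condP μ (C x) (B x) :=
    mul_le_mul hI1le hIQle hIQnonneg (le_trans hI1nonneg hI1le)
  have h1 : condP μ (A x) (B x ∩ (C x)ᶜ) * (1 - S)
      ≤ condP μ (A x) (B x ∩ (C x)ᶜ) * (1 - condP μ (C x) (B x)) := by
    apply mul_le_mul_of_nonneg_left _ ha0nonneg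
    linarith
  linarith
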